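/- arXiv:2004.08664 — 3 statements merged into one kernel-verified Lean document; each statement's English description precedes it below -/
import Mathlib

section
/- For a permutation π of [n] with Hamming distance d > 0 from the identity, the number of exchange mutations (unordered pairs of distinct positions) whose application strictly decreases the Hamming distance to the identity is at least ⌈d/2⌉ and at most d. -/
/-- Hamming distance of a permutation of `Fin n` to the identity. -/
def hamDist {n : ℕ} (π : Equiv.Perm (Fin n)) : ℕ :=
  (Finset.univ.filter fun i => π i ≠ i).card

lemma pairCard {α : Type*} [DecidableEq α] (P : α → Prop) [DecidablePred P]
    (a b : α) (hab : a ≠ b) :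
    (({a, b} : Finset α).filter P).card
      = (if P a then 1 else 0) + (if P b then 1 else 0) := by
  rw [Finset.filter_insert, Finset.filter_singleton]
  split <;> split <;> simp_all [Finset.card_insert_of_notMem]

lemma ham_split {n : ℕ} (σ : Equiv.Perm (Fin n)) (a b : Fin n) (hab : a ≠ b) :
    hamDist σ = ((Finset.univ \ {a, b}).filter (fun i => σ i ≠ i)).card
      + ((if σ a ≠ a then 1 else 0) + (if σ b ≠ b then 1 else 0)) := by
  have h : (Finset.univ : Finset (Fin n)) = (Finset.univ \ {a, b}) ∪ {a, b} :=
    (Finset.sdiff_union_of_subset (Finset.subset_univ _)).symm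
  rw [hamDist]
  conv_lhs => rw [h]
  rw [Finset.filter_union, Finset.card_union_of_disjoint
    (Finset.disjoint_filter_filter Finset.sdiff_disjoint), pairCard _ a b hab]

lemma decr_iff {n : ℕ} (π : Equiv.Perm (Fin n)) (a b : Fin n) (hab : a ≠ b) :
    hamDist (π * Equiv.swap a b) < hamDist π ↔
      (π a ≠ a ∧ π b ≠ b ∧ (π a = b ∨ π b = a)) := by
  have hσa : (π * Equiv.swap a b) a = π b := by simp
  have hσb : (π * Equiv.swap a b) b = π a := by simp
  have hoff : ((Finset.univ \ {a, b}).filter (fun i => (π * Equiv.swap a b) i ≠ i))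
      = ((Finset.univ \ {a, b}).filter (fun i => π i ≠ i)) := by
    apply Finset.filter_congr
    intro i hi
    simp only [Finset.mem_sdiff, Finset.mem_insert, Finset.mem_singleton, not_or] at hi
    have : Equiv.swap a b i = i := Equiv.swap_apply_of_ne_of_ne hi.2.1 hi.2.2
    simp [Equiv.Perm.mul_apply, this]
  rw [ham_split π a b hab, ham_split (π * Equiv.swap a b) a b hab, hoff, hσa, hσb]
  by_cases h1 : π a = a <;> by_cases h2 : π b = b <;> by_cases h3 : π a = b <;>
    by_cases h4 : π b = a <;> simp_all

theorem stmt_2 (n : ℕ) (π : Equiv.Perm (Fin n)) (d : ℕ) (hd : hamDist π = d)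
    (hpos : 0 < d) :
    (d + 1) / 2 ≤
      ((Finset.univ ×ˢ Finset.univ).filter
        (fun p : Fin n × Fin n =>
          p.1 < p.2 ∧ hamDist (π * Equiv.swap p.1 p.2) < d)).card ∧
    ((Finset.univ ×ˢ Finset.univ).filter
        (fun p : Fin n × Fin n =>
          p.1 < p.2 ∧ hamDist (π * Equiv.swap p.1 p.2) < d)).card ≤ d := by
  subst hd
  set D : Finset (Fin n) := Finset.univ.filter (fun i => π i ≠ i) with hD
  set f : Fin n → Fin n × Fin n := fun i => if i < π i then (i, π i) else (π i, i) with hf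
  set S := ((Finset.univ ×ˢ Finset.univ).filter
      (fun p : Fin n × Fin n =>
        p.1 < p.2 ∧ hamDist (π * Equiv.swap p.1 p.2) < hamDist π)) with hS
  have key : S = D.image f := by
    ext p
    simp only [hS, hD, Finset.mem_filter, Finset.mem_image, Finset.mem_product,
      Finset.mem_univ, true_and, and_true]
    constructor
    · rintro ⟨hlt, hdec⟩
      rw [decr_iff π p.1 p.2 (ne_of_lt hlt)] at hdec
      obtain ⟨h1, h2, h3 | h3⟩ := hdec
      · exact ⟨p.1, h1, by simp [hf, h3, hlt]⟩
      · refine ⟨p.2, h2, ?_⟩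
        have : ¬ p.2 < p.1 := not_lt_of_gt hlt
        simp [hf, h3, this]
    · rintro ⟨i, hi, hfi⟩
      have hinj : π (π i) ≠ π i := fun h => hi (π.injective h)
      by_cases hlt : i < π i
      · have hp : p = (i, π i) := by rw [← hfi]; simp [hf, hlt]
        subst hp
        refine ⟨hlt, ?_⟩
        rw [decr_iff π _ _ (ne_of_lt hlt)]
        exact ⟨hi, hinj, Or.inl rfl⟩
      · have hlt' : π i < i := lt_of_le_of_ne (not_lt.mp hlt) (fun h => hi h)
        have hp : p = (π i, i) := by rw [← hfi]; simp [hf, hlt]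
        subst hp
        refine ⟨hlt', ?_⟩
        rw [decr_iff π _ _ (ne_of_lt hlt')]
        exact ⟨hinj, hi, Or.inr rfl⟩
  constructor
  · have hle : D.card ≤ 2 * (D.image f).card := by
      apply Finset.card_le_mul_card_image
      intro p _
      have hsub : D.filter (fun i => f i = p) ⊆ {p.1, p.2} := by
        intro i hi
        simp only [Finset.mem_filter] at hi
        simp only [Finset.mem_insert, Finset.mem_singleton]
        rcases hi with ⟨_, hfi⟩
        by_cases hlt : i < π i
        · simp [hf, hlt, Prod.ext_iff] at hfi
          left; exact hfi.1
        · simp [hf, hlt, Prod.ext_iff] at hfi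
          right; exact hfi.2
      calc (D.filter (fun i => f i = p)).card ≤ ({p.1, p.2} : Finset (Fin n)).card :=
            Finset.card_le_card hsub
        _ ≤ 2 := Finset.card_insert_le _ _ |>.trans (by simp)
    rw [key]
    have : hamDist π = D.card := rfl
    omega
  · rw [key]
    calc (D.image f).card ≤ D.card := Finset.card_image_le
      _ = hamDist π := rfl
end

section
/- If, for a permutation π of [n] with Hamming distance d from the identity, exactly x exchange mutations decrease the Hamming distance by 2, then exactly d − 2x exchange mutations decrease the Hamming distance by exactly 1, and x equals the number of 2-cycles (transpositions) in the cycle decomposition of π. -/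
/-!
Swapping the values at positions `i ≠ j` only changes whether `i` and `j` are fixed points, and
`d(π (i j)) + [π i = j] + [π j = i] = d(π) + [π i = i] + [π j = j]`.
So the distance drops by 2 exactly when `(i j)` is a 2-cycle of `π`, and by 1 exactly when
exactly one of `π i = j`, `π j = i` holds. Every moved point `k` gives the arrow `k ↦ π k`
inside the pair `{k, π k}`; counting arrows pair by pair gives `#(drops by 1) + 2 x = d`.
-/

open Finset Equiv

namespace Equiv.Perm

variable {α : Type*} [Fintype α] [DecidableEq α]

theorem card_support_mul_swap_add (σ : Perm α) {i j : α} (hij : i ≠ j) :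
    #(σ * swap i j).support + (if σ i = j then 1 else 0) + (if σ j = i then 1 else 0) =
      #σ.support + (if σ i = i then 1 else 0) + (if σ j = j then 1 else 0) := by
  have hsplit : ∀ τ : Perm α, #τ.support = (if τ i ≠ i then 1 else 0) + (if τ j ≠ j then 1 else 0)
      + ∑ k ∈ univ \ {i, j}, if τ k ≠ k then 1 else 0 := fun τ => by
    rw [support, card_filter, ← sum_sdiff (subset_univ {i, j}), sum_pair hij, add_comm]
  have houtside : ∀ k ∈ univ \ {i, j}, (σ * swap i j) k = σ k := fun k hk => by
    simp only [mem_sdiff, mem_insert, mem_singleton, mem_univ, true_and, not_or] at hk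
    rw [Perm.mul_apply, swap_apply_of_ne_of_ne hk.1 hk.2]
  rw [hsplit, hsplit, sum_congr rfl fun k hk => by rw [houtside k hk]]
  simp only [Perm.mul_apply, swap_apply_left, swap_apply_right, ne_eq, ite_not]
  split_ifs <;> omega

theorem card_support_mul_swap_add_two_iff (σ : Perm α) {i j : α} (hij : i ≠ j) :
    #(σ * swap i j).support + 2 = #σ.support ↔ σ i = j ∧ σ j = i := by
  have key := σ.card_support_mul_swap_add hij
  grind [σ.injective.eq_iff]

theorem card_support_mul_swap_add_one_iff (σ : Perm α) {i j : α} (hij : i ≠ j) :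
    #(σ * swap i j).support + 1 = #σ.support ↔ Xor (σ i = j) (σ j = i) := by
  have key := σ.card_support_mul_swap_add hij
  grind [σ.injective.eq_iff]

end Equiv.Perm

section Counting

variable {α : Type*} [Fintype α] [LinearOrder α]

theorem card_filter_lt_and_apply_fst_eq_snd (f : α → α) :
    #{p ∈ univ ×ˢ univ | p.1 < p.2 ∧ f p.1 = p.2} = #{k | k < f k} := by
  symm
  apply card_nbij' (fun k => (k, f k)) Prod.fst <;>
    simp +contextual [Set.MapsTo, Set.LeftInvOn, Set.RightInvOn]

theorem card_filter_lt_and_apply_snd_eq_fst (f : α → α) :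
    #{p ∈ univ ×ˢ univ | p.1 < p.2 ∧ f p.2 = p.1} = #{k | f k < k} := by
  symm
  apply card_nbij' (fun k => (f k, k)) Prod.snd <;>
    simp +contextual [Set.MapsTo, Set.LeftInvOn, Set.RightInvOn]

theorem card_filter_lt_apply_add_card_filter_apply_lt (σ : Perm α) :
    #{k | k < σ k} + #{k | σ k < k} = #σ.support := by
  rw [← card_union_of_disjoint (disjoint_filter.2 fun k _ h => h.not_gt), ← filter_or]
  simp only [lt_or_lt_iff_ne, ne_comm, Perm.support]

theorem card_filter_xor_add_two_mul_card_filter_and {β : Type*} (s : Finset β) (a b : β → Prop)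
    [DecidablePred a] [DecidablePred b] :
    #{x ∈ s | Xor (a x) (b x)} + 2 * #{x ∈ s | a x ∧ b x} = #{x ∈ s | a x} + #{x ∈ s | b x} := by
  simp only [card_filter, mul_sum, ← sum_add_distrib]
  refine sum_congr rfl fun x _ => ?_
  by_cases a x <;> by_cases b x <;> simp [*, Xor]

theorem Equiv.Perm.card_filter_lt_and_xor_add_two_mul_card_filter_lt_and_and (σ : Perm α) :
    #{p ∈ univ ×ˢ univ | p.1 < p.2 ∧ Xor (σ p.1 = p.2) (σ p.2 = p.1)} +
        2 * #{p ∈ univ ×ˢ univ | p.1 < p.2 ∧ σ p.1 = p.2 ∧ σ p.2 = p.1} = #σ.support := by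
  simpa only [filter_filter, card_filter_lt_and_apply_fst_eq_snd,
    card_filter_lt_and_apply_snd_eq_fst, card_filter_lt_apply_add_card_filter_apply_lt] using
    card_filter_xor_add_two_mul_card_filter_and {p ∈ univ ×ˢ univ | p.1 < p.2}
      (fun p => σ p.1 = p.2) (fun p => σ p.2 = p.1)

end Counting

-- Proved `by rfl` rather than `:= rfl` so that `simp` uses it as a rewrite rule, which also
-- transports the `Decidable` instances of the filters in the theorem below.
theorem hamDist_eq_card_support {n : ℕ} (π : Perm (Fin n)) : hamDist π = #π.support := by
  rfl

theorem stmt_4 (n : ℕ) (π : Equiv.Perm (Fin n)) (d x : ℕ) (hd : hamDist π = d)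
    (hx : x = ((Finset.univ ×ˢ Finset.univ).filter
        (fun p : Fin n × Fin n =>
          p.1 < p.2 ∧ hamDist (π * Equiv.swap p.1 p.2) + 2 = d)).card) :
    ((Finset.univ ×ˢ Finset.univ).filter
        (fun p : Fin n × Fin n =>
          p.1 < p.2 ∧ hamDist (π * Equiv.swap p.1 p.2) + 1 = d)).card = d - 2 * x ∧
    x = ((Finset.univ ×ˢ Finset.univ).filter
        (fun p : Fin n × Fin n =>
          p.1 < p.2 ∧ π p.1 = p.2 ∧ π p.2 = p.1)).card := by
  subst hd
  simp only [hamDist_eq_card_support] at hx ⊢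
  rw [filter_congr fun p _ => and_congr_right fun h =>
    π.card_support_mul_swap_add_two_iff h.ne] at hx
  rw [filter_congr fun p _ => and_congr_right fun h =>
    π.card_support_mul_swap_add_one_iff h.ne]
  have := π.card_filter_lt_and_xor_add_two_mul_card_filter_lt_and_and
  exact ⟨by omega, hx⟩
end

section
/- For a permutation π of [n] with Hamming distance d ≥ 2 from the identity, the probability that a uniformly random exchange mutation strictly decreases the Hamming distance is at least d/(n(n-1)) and at most 2d/(n(n-1)). -/
/-! An exchange of the positions `i ≠ j` only changes the entries at `i` and `j`, so it strictly
lowers the number of non-fixed points exactly when it puts one of them in place, i.e. when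
`π i = j` or `π j = i`. These pairs are the images of the `d` non-fixed points `k` under
`k ↦ {k, π k}`, a map that is at most two-to-one, so there are between `d / 2` and `d` of them. -/

open Finset Equiv

theorem card_le_two_mul_card_image_min_max {α : Type*} [LinearOrder α] (s : Finset α)
    (f : α → α) : #s ≤ 2 * #(s.image fun k => (min k (f k), max k (f k))) := by
  refine card_le_mul_card_image s 2 fun p _ => ?_
  calc #(s.filter fun k => (min k (f k), max k (f k)) = p) ≤ #({p.1, p.2} : Finset α) := by
        refine card_le_card fun k hk => ?_
        obtain ⟨-, rfl⟩ := mem_filter.mp hk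
        rcases le_total k (f k) with h | h <;> simp [h]
    _ ≤ 2 := card_le_two

namespace Equiv.Perm

variable {α : Type*} [Fintype α]

section DecidableEq

variable [DecidableEq α]

theorem card_support_eq_sum_pair_add_sum_compl (σ : Perm α) {i j : α} (hij : i ≠ j) :
    #σ.support = (if σ i ≠ i then 1 else 0) + (if σ j ≠ j then 1 else 0) +
      ∑ k ∈ ({i, j} : Finset α)ᶜ, if σ k ≠ k then 1 else 0 := by
  rw [support, card_filter, ← sum_add_sum_compl {i, j}, sum_pair hij]

theorem card_support_mul_swap_lt_iff (σ : Perm α) {i j : α} (hij : i ≠ j) :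
    #(σ * swap i j).support < #σ.support ↔ σ i = j ∨ σ j = i := by
  have hcompl : ∀ k ∈ ({i, j} : Finset α)ᶜ, (σ * swap i j) k = σ k := by
    intro k hk
    simp only [mem_compl, mem_insert, mem_singleton, not_or] at hk
    rw [mul_apply, swap_apply_of_ne_of_ne hk.1 hk.2]
  rw [card_support_eq_sum_pair_add_sum_compl _ hij, card_support_eq_sum_pair_add_sum_compl _ hij,
    sum_congr rfl fun k hk => by rw [hcompl k hk], add_lt_add_iff_right]
  simp only [mul_apply, swap_apply_left, swap_apply_right]
  have hσij : σ i ≠ σ j := σ.injective.ne hij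
  grind

end DecidableEq

variable [LinearOrder α]

theorem filter_lt_and_apply_eq_eq_image_support (σ : Perm α) :
    (univ ×ˢ univ).filter (fun p : α × α => p.1 < p.2 ∧ (σ p.1 = p.2 ∨ σ p.2 = p.1)) =
      σ.support.image fun k => (min k (σ k), max k (σ k)) := by
  ext ⟨i, j⟩
  simp only [mem_filter, mem_product, mem_univ, true_and, mem_image, mem_support, Prod.mk.injEq]
  constructor
  · rintro ⟨hlt, h | h⟩
    · exact ⟨i, by simp [h, hlt.ne'], by simp [h, hlt.le]⟩
    · exact ⟨j, by simp [h, hlt.ne], by simp [h, hlt.le]⟩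
  · rintro ⟨k, hk, rfl, rfl⟩
    rcases lt_or_gt_of_ne hk with h | h <;> simp [h.le, h]

theorem filter_mul_swap_card_support_lt_eq_image (σ : Perm α) :
    (univ ×ˢ univ).filter (fun p : α × α => p.1 < p.2 ∧ #(σ * swap p.1 p.2).support < #σ.support) =
      σ.support.image fun k => (min k (σ k), max k (σ k)) := by
  rw [← σ.filter_lt_and_apply_eq_eq_image_support]
  exact filter_congr fun _ _ => and_congr_right fun h => σ.card_support_mul_swap_lt_iff h.ne

end Equiv.Perm

theorem natCast_mul_natCast_sub_one_nonneg (n : ℕ) : (0 : ℚ) ≤ n * (n - 1) := by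
  rcases n with _ | m
  · simp
  · push_cast; ring_nf; positivity

theorem stmt_15_general (n : ℕ) (π : Equiv.Perm (Fin n)) (d : ℕ) (hd : hamDist π = d) :
    (d : ℚ) / (n * (n - 1)) ≤
      (((Finset.univ ×ˢ Finset.univ).filter
          (fun p : Fin n × Fin n =>
            p.1 < p.2 ∧ hamDist (π * Equiv.swap p.1 p.2) < d)).card : ℚ)
        / ((n * (n - 1) : ℚ) / 2) ∧
    (((Finset.univ ×ˢ Finset.univ).filter
          (fun p : Fin n × Fin n =>
            p.1 < p.2 ∧ hamDist (π * Equiv.swap p.1 p.2) < d)).card : ℚ)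
        / ((n * (n - 1) : ℚ) / 2) ≤ 2 * d / (n * (n - 1)) := by
  subst hd
  have himproving : (univ ×ˢ univ).filter
      (fun p : Fin n × Fin n => p.1 < p.2 ∧ hamDist (π * swap p.1 p.2) < hamDist π) =
        π.support.image fun k => (min k (π k), max k (π k)) :=
    (filter_congr fun _ _ => Iff.rfl).trans π.filter_mul_swap_card_support_lt_eq_image
  rw [himproving, hamDist_eq_card_support, div_div_eq_mul_div, mul_comm _ (2 : ℚ)]
  have hlower : (#π.support : ℚ) ≤ 2 * #(π.support.image fun k => (min k (π k), max k (π k))) := by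
    exact_mod_cast card_le_two_mul_card_image_min_max π.support π
  have hupper : (#(π.support.image fun k => (min k (π k), max k (π k))) : ℚ) ≤ #π.support := by
    exact_mod_cast card_image_le
  have hN := natCast_mul_natCast_sub_one_nonneg n
  exact ⟨div_le_div_of_nonneg_right hlower hN, div_le_div_of_nonneg_right (by linarith) hN⟩

theorem stmt_15 (n : ℕ) (π : Equiv.Perm (Fin n)) (d : ℕ) (hd : hamDist π = d)
    (hd2 : 2 ≤ d) :
    (d : ℚ) / (n * (n - 1)) ≤
      (((Finset.univ ×ˢ Finset.univ).filter
          (fun p : Fin n × Fin n =>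
            p.1 < p.2 ∧ hamDist (π * Equiv.swap p.1 p.2) < d)).card : ℚ)
        / ((n * (n - 1) : ℚ) / 2) ∧
    (((Finset.univ ×ˢ Finset.univ).filter
          (fun p : Fin n × Fin n =>
            p.1 < p.2 ∧ hamDist (π * Equiv.swap p.1 p.2) < d)).card : ℚ)
        / ((n * (n - 1) : ℚ) / 2) ≤ 2 * d / (n * (n - 1)) :=
  stmt_15_general n π d hd
end
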